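/- Let n ≥ 2, m₀ = [n²/2 + 2], r̄ > 0, and let h : B_r̄ → ℝ be of class C^{m₀+1} with ‖∇h(0)‖ ≥ ϖ > 0, and suppose the Taylor polynomial T₀^{m₀}h is (ρ',C',δ')-stably steep. Then for every r > 0 sufficiently small with respect to r̄, ‖h‖_{C^{m₀+1}(B_r̄)}, ρ', ϖ, m₀, C' and δ', the function h is (κ,C,δ,m₀−1)-steep on B_{2r} with κ = ϖ/2, C = C'/2 and δ = r. -/

import Mathlib

open MeasureTheory Set Metric
open scoped ENNReal

noncomputable section

/-- Euclidean `n`-space, the model for both the angle variables `θ`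
(read modulo `ℤⁿ`) and the action variables `I`. -/
abbrev En (n : ℕ) := EuclideanSpace ℝ (Fin n)

/-- The phase space `ℝⁿ_θ × ℝⁿ_I`; the angle component is read modulo `ℤⁿ`,
so that `ℤⁿ`-periodic-in-`θ` functions on `Phase n` represent functions on `𝕋ⁿ × ℝⁿ`. -/
abbrev Phase (n : ℕ) := En n × En n

/-- `i`-th standard basis vector of `ℝⁿ`. -/
def bvec (n : ℕ) (i : Fin n) : En n := EuclideanSpace.single i (1 : ℝ)

/-- An integer vector, viewed in `ℝⁿ`. -/
def zlift (n : ℕ) (m : Fin n → ℤ) : En n :=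
  (WithLp.equiv 2 (Fin n → ℝ)).symm fun i => (m i : ℝ)

/-- Directional derivative of a scalar function. -/
def dirDeriv {F : Type*} [NormedAddCommGroup F] [NormedSpace ℝ F] (v : F) (f : F → ℝ) : F → ℝ :=
  fun x => fderiv ℝ f x v

/-- Iterated directional derivatives along a list of directions. -/
def listDeriv {F : Type*} [NormedAddCommGroup F] [NormedSpace ℝ F] (vs : List F) (f : F → ℝ) :
    F → ℝ :=
  vs.foldr dirDeriv f

/-- The list of directions encoding the multi-index `k` w.r.t. basis `b`. -/
def idxList {F : Type*} (n : ℕ) (k : Fin n → ℕ) (b : Fin n → F) : List F :=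
  (List.finRange n).foldr (fun i acc => List.replicate (k i) (b i) ++ acc) []

/-- Length `|k|` of a multi-index. -/
def midxAbs {n : ℕ} (k : Fin n → ℕ) : ℕ := ∑ i, k i

/-- Factorial `k!` of a multi-index. -/
def midxFact {n : ℕ} (k : Fin n → ℕ) : ℕ := ∏ i, Nat.factorial (k i)

/-- The partial derivative `∂_θ^k ∂_I^l H` on phase space. -/
def pderivPhase (n : ℕ) (k l : Fin n → ℕ) (H : Phase n → ℝ) : Phase n → ℝ :=
  listDeriv (idxList n k (fun i => ((bvec n i, 0) : Phase n)) ++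
    idxList n l (fun i => ((0, bvec n i) : Phase n))) H

/-- The partial derivative `∂_I^l h` on action space. -/
def pderivAct (n : ℕ) (l : Fin n → ℕ) (h : En n → ℝ) : En n → ℝ :=
  listDeriv (idxList n l (bvec n)) h

/-- The `(α,β,L₁,L₂)`-Gevrey bound `M` for `H` on `𝕋ⁿ × U`:
`|∂_θ^k ∂_I^l H| ≤ M L₁^{|k|} L₂^{|l|} (k!)^α (l!)^β` there. -/
def GevreyBoundPhase (n : ℕ) (α β L₁ L₂ : ℝ) (U : Set (En n)) (H : Phase n → ℝ) (M : ℝ) : Prop :=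
  ∀ (k l : Fin n → ℕ) (θ : En n), ∀ I ∈ U,
    |pderivPhase n k l H (θ, I)| ≤
      M * L₁ ^ midxAbs k * L₂ ^ midxAbs l * (midxFact k : ℝ) ^ α * (midxFact l : ℝ) ^ β

/-- The `(β,L)`-Gevrey bound `M` for `h` on `U ⊆ ℝⁿ`. -/
def GevreyBoundAct (n : ℕ) (β L : ℝ) (U : Set (En n)) (h : En n → ℝ) (M : ℝ) : Prop :=
  ∀ l : Fin n → ℕ, ∀ I ∈ U,
    |pderivAct n l h I| ≤ M * L ^ midxAbs l * (midxFact l : ℝ) ^ β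

/-- `ℤⁿ`-periodicity in the angle variable. -/
def ThetaPeriodic (n : ℕ) (H : Phase n → ℝ) : Prop :=
  ∀ (θ I : En n) (m : Fin n → ℤ), H (θ + zlift n m, I) = H (θ, I)

/-- Membership in the Gevrey class `G^{α,β}_{L₁,L₂}(𝕋ⁿ × U)`:
a smooth `ℤⁿ`-periodic-in-`θ` function with finite Gevrey norm on `𝕋ⁿ × U`. -/
def InGevreyPhase (n : ℕ) (α β L₁ L₂ : ℝ) (U : Set (En n)) (H : Phase n → ℝ) : Prop :=
  ContDiff ℝ (⊤ : ℕ∞) H ∧ ThetaPeriodic n H ∧ ∃ M, GevreyBoundPhase n α β L₁ L₂ U H M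

/-- Membership in the Gevrey class `G^β_L(U)` for functions of the action only. -/
def InGevreyAct (n : ℕ) (β L : ℝ) (U : Set (En n)) (h : En n → ℝ) : Prop :=
  ContDiff ℝ (⊤ : ℕ∞) h ∧ ∃ M, GevreyBoundAct n β L U h M

/-- Euclidean dot product. -/
def dotp {n : ℕ} (v w : En n) : ℝ := ∑ i, v i * w i

/-- `(θ(t), I(t))` is a solution of the Hamiltonian system associated to `H`:
`θ' = ∂_I H`, `I' = −∂_θ H`. -/
def IsHamSol (n : ℕ) (H : Phase n → ℝ) (θc Ic : ℝ → En n) : Prop :=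
  ∀ t : ℝ,
    (∀ i, HasDerivAt (fun s => θc s i) (fderiv ℝ H (θc t, Ic t) (0, bvec n i)) t) ∧
    (∀ i, HasDerivAt (fun s => Ic s i) (-(fderiv ℝ H (θc t, Ic t) (bvec n i, 0))) t)

/-- The Diophantine condition `Dio_{γ,τ}`: `|k·ω| ≥ γ |k|^{−τ}` for all `k ∈ ℤⁿ \ {0}`. -/
def IsDiophantine (n : ℕ) (γ τ : ℝ) (ω : En n) : Prop :=
  ∀ k : Fin n → ℤ, k ≠ 0 →
    γ * (((∑ i, |k i| : ℤ) : ℝ)) ^ (-τ) ≤ |∑ i, (k i : ℝ) * ω i|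

/-- Index set for the monomials `X^d` with `2 ≤ |d| ≤ m` in `n` variables. -/
abbrev MonIdx (n m : ℕ) := {d : Fin n → Fin (m + 1) // 2 ≤ ∑ i, (d i : ℕ) ∧ ∑ i, (d i : ℕ) ≤ m}

/-- The space `P₂(n,m)` of polynomials in `n` variables of degree at most `m`
with no constant or linear terms, identified with its coefficient space. -/
abbrev P2Space (n m : ℕ) := MonIdx n m → ℝ

/-- Evaluation of an element of `P₂(n,m)` at a point of `ℝⁿ`. -/
def evalP2 {n m : ℕ} (P : P2Space n m) (x : En n) : ℝ :=
  ∑ d : MonIdx n m, P d * ∏ i, x i ^ (d.1 i : ℕ)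

/-- `P₀ ∈ P₂(n,m)` is `(ρ,C,δ)`-stably steep. -/
def StablySteepWith (n m : ℕ) (ρ C δ : ℝ) (P₀ : P2Space n m) : Prop :=
  ∀ l : ℕ, 1 ≤ l → l ≤ n - 1 →
    ∀ P : P2Space n m, ‖P - P₀‖ < ρ →
      ∀ Λ : Submodule ℝ (En n), Module.finrank ℝ Λ = l →
        ∀ ξ : ℝ, 0 < ξ → ξ ≤ δ →
          ∃ η : ℝ, 0 ≤ η ∧ η ≤ ξ ∧
            ∀ x : Λ, ‖x‖ = η →
              C * ξ ^ (m - 1) < ‖gradient (fun y : Λ => evalP2 P (y : En n)) x‖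

/-- The set `SS(n,m)` of stably steep polynomials. -/
def StablySteep (n m : ℕ) (P₀ : P2Space n m) : Prop :=
  ∃ ρ C δ : ℝ, 0 < ρ ∧ 0 < C ∧ 0 < δ ∧ StablySteepWith n m ρ C δ P₀

/-- `h` is `(κ,C,δ,p)`-steep on `G'`. -/
def SteepOn (n : ℕ) (h : En n → ℝ) (G' : Set (En n)) (κ C δ p : ℝ) : Prop :=
  ∀ I ∈ G',
    κ ≤ ‖gradient h I‖ ∧
    ∀ l : ℕ, 1 ≤ l → l ≤ n - 1 →
      ∀ Λ : Submodule ℝ (En n), Module.finrank ℝ Λ = l →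
        ∀ ξ : ℝ, 0 < ξ → ξ ≤ δ →
          ∃ η : ℝ, 0 ≤ η ∧ η ≤ ξ ∧
            ∀ x : Λ, ‖x‖ = η →
              C * ξ ^ p <
                ‖gradient (fun y : Λ => h (I + y)) x - gradient (fun y : Λ => h (I + y)) 0‖

/-- The Taylor polynomial `T_I^m h ∈ P₂(n,m)` (orders 2 to m),
in coefficient form: the coefficient of `X^d` is `∂^d h(I)/d!`. -/
def taylorP2 (n m : ℕ) (h : En n → ℝ) (I : En n) : P2Space n m :=
  fun d => pderivAct n (fun i => (d.1 i : ℕ)) h I / (midxFact (fun i => (d.1 i : ℕ)) : ℝ)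

/-- A quadratic polynomial in `P₂(n,2)` is non-degenerate (`N(n,2)`):
its polarization is a non-degenerate bilinear form. -/
def NonDegQuad {n : ℕ} (P : P2Space n 2) : Prop :=
  ∀ x : En n, x ≠ 0 → ∃ y : En n, evalP2 P (x + y) - evalP2 P x - evalP2 P y ≠ 0

/-- The canonical symplectic form `dI ∧ dθ` on phase space. -/
def stdSymp (n : ℕ) (u v : Phase n) : ℝ :=
  (∑ i, u.2 i * v.1 i) - ∑ i, v.2 i * u.1 i

/-- The open `ρ`-neighborhood `V_ρ S` of a set in `ℝⁿ`. -/
def vnbhd (n : ℕ) (S : Set (En n)) (ρ : ℝ) : Set (En n) :=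
  {x | ∃ y ∈ S, dist x y < ρ}

/-- The open `ρ`-neighborhood of a subset of phase space. -/
def vnbhdPhase (n : ℕ) (S : Set (Phase n)) (ρ : ℝ) : Set (Phase n) :=
  {x | ∃ y ∈ S, dist x y < ρ}

/-- A fundamental domain `[0,1)ⁿ` for the angle variables. -/
def fundDomain (n : ℕ) : Set (En n) := {θ | ∀ i, 0 ≤ θ i ∧ θ i < 1}

/-- `P` is a Birkhoff polynomial of order `m` of the Hamiltonian `H` (with
`H(θ,I) = ω·I + O(‖I‖²)` on `𝕋ⁿ × B`) at the invariant torus `𝕋ⁿ × {0}`: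
there is a symplectic change of coordinates near the torus after which
`H = ω·I + P(I) + O(‖I‖^{m+1})`. -/
def IsBirkhoffPoly (n : ℕ) (B : Set (En n)) (H : Phase n → ℝ) (ω : En n) (m : ℕ)
    (P : P2Space n m) : Prop :=
  ∃ (ρ₀ : ℝ) (Φ : Phase n → Phase n), 0 < ρ₀ ∧
    ContDiffOn ℝ (⊤ : ℕ∞) Φ (univ ×ˢ ball (0 : En n) ρ₀) ∧
    (∀ (θ I : En n) (mv : Fin n → ℤ), Φ (θ + zlift n mv, I) = Φ (θ, I) + (zlift n mv, 0)) ∧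
    MapsTo Φ (univ ×ˢ ball (0 : En n) ρ₀) (univ ×ˢ B) ∧
    (∀ x ∈ (univ ×ˢ ball (0 : En n) ρ₀ : Set (Phase n)), ∀ u v : Phase n,
      stdSymp n (fderiv ℝ Φ x u) (fderiv ℝ Φ x v) = stdSymp n u v) ∧
    ∃ C : ℝ, ∀ (θ : En n), ∀ I ∈ ball (0 : En n) ρ₀,
      |H (Φ (θ, I)) - dotp ω I - evalP2 P I| ≤ C * ‖I‖ ^ (m + 1)

/-- The invariant torus `𝒯 ⊆ 𝕋ⁿ × ℝⁿ` is doubly exponentially stable with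
exponent `u` for the Hamiltonian flow of `H`. -/
def DoublyExpStableTorus (n : ℕ) (H : Phase n → ℝ) (T : Set (Phase n)) (u : ℝ) : Prop :=
  ∃ rstar Cst : ℝ, 0 < rstar ∧ 0 < Cst ∧
    ∀ r : ℝ, 0 < r → r ≤ rstar →
      ∀ θc Ic : ℝ → En n, IsHamSol n H θc Ic →
        (θc 0, Ic 0) ∈ vnbhdPhase n T r →
          ∀ t : ℝ, |t| ≤ Real.exp (Real.exp (Cst * r ^ (-u))) →
            (θc t, Ic t) ∈ vnbhdPhase n T (2 * r)

/-- `T` is an embedded invariant Lagrangian torus of `H` carrying a quasi-periodic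
flow with Diophantine frequency. -/
def IsInvLagDiophTorus (n : ℕ) (H : Phase n → ℝ) (T : Set (Phase n)) : Prop :=
  ∃ (F : En n → Phase n) (ω : En n) (γ τ : ℝ), 0 < γ ∧
    IsDiophantine n γ τ ω ∧
    ContDiff ℝ (⊤ : ℕ∞) F ∧
    (∀ (θ : En n) (m : Fin n → ℤ), F (θ + zlift n m) = F θ + (zlift n m, 0)) ∧
    T = range F ∧
    (∀ θ θ' : En n, F θ = F θ' → ∃ m : Fin n → ℤ, θ' = θ + zlift n m) ∧
    (∀ θ : En n, Function.Injective (fderiv ℝ F θ)) ∧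
    (∀ (θ : En n) (u v : En n), stdSymp n (fderiv ℝ F θ u) (fderiv ℝ F θ v) = 0) ∧
    ∀ θ₀ : En n, IsHamSol n H (fun t => (F (θ₀ + t • ω)).1) (fun t => (F (θ₀ + t • ω)).2)

/-- `h` is KAM doubly exponentially stable with exponent `u` on `D̄`. -/
def KAMDoublyExpStable (n : ℕ) (α L : ℝ) (D : Set (En n)) (h : En n → ℝ) (u : ℝ) : Prop :=
  ∀ f : Phase n → ℝ, InGevreyPhase n α α L L (closure D) f →
    ∃ Cm : ℝ, 0 < Cm ∧
      ∀ γ : ℝ, 0 < γ →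
        ∃ εs : ℝ, 0 < εs ∧
          ∀ ε : ℝ, 0 ≤ ε → ε ≤ εs →
            ∃ 𝒯 : Set (Set (Phase n)),
              (∀ T ∈ 𝒯, T ⊆ univ ×ˢ closure D ∧
                IsInvLagDiophTorus n (fun x => h x.2 + ε * f x) T ∧
                DoublyExpStableTorus n (fun x => h x.2 + ε * f x) T u) ∧
              volume ((fundDomain n ×ˢ closure D) \ ⋃₀ 𝒯) ≤ ENNReal.ofReal (Cm * γ)


/-- The Gevrey `(α,β,L₁,L₂)`-distance (extended-real-valued Gevrey norm) on `𝕋ⁿ × U`. -/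
def gevreyENormPhase (n : ℕ) (α β L₁ L₂ : ℝ) (U : Set (En n)) (H : Phase n → ℝ) : ℝ≥0∞ :=
  ⨆ (k : Fin n → ℕ) (l : Fin n → ℕ) (θ : En n) (I : U),
    ENNReal.ofReal (|pderivPhase n k l H (θ, I)| /
      (L₁ ^ midxAbs k * L₂ ^ midxAbs l * (midxFact k : ℝ) ^ α * (midxFact l : ℝ) ^ β))

def gevreyENormAct (n : ℕ) (β L : ℝ) (U : Set (En n)) (h : En n → ℝ) : ℝ≥0∞ :=
  ⨆ (l : Fin n → ℕ) (I : U),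
    ENNReal.ofReal (|pderivAct n l h I| / (L ^ midxAbs l * (midxFact l : ℝ) ^ β))

/-- `S` is open in `𝓗` for the distance induced by the norm `gnorm`. -/
def IsOpenInWith {X : Type*} [Sub X] (𝓗 S : Set X) (gnorm : X → ℝ≥0∞) : Prop :=
  S ⊆ 𝓗 ∧ ∀ H ∈ S, ∃ ε : ℝ, 0 < ε ∧ ∀ H' ∈ 𝓗, gnorm (H' - H) < ENNReal.ofReal ε → H' ∈ S

/-- `S` is dense in `𝓗` for the distance induced by the norm `gnorm`. -/
def IsDenseInWith {X : Type*} [Sub X] (𝓗 S : Set X) (gnorm : X → ℝ≥0∞) : Prop :=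
  ∀ H ∈ 𝓗, ∀ ε : ℝ, 0 < ε → ∃ H' ∈ S, gnorm (H' - H) < ENNReal.ofReal ε

/-- `S` is prevalent in `𝓗` (finite-dimensional probe formulation of
Hunt–Sauer–Yorke prevalence, relative to the affine subset `𝓗`): there is a
finite-dimensional space of directions such that from any point of `𝓗`,
Lebesgue almost every perturbation in these directions lands in `S`. -/
def IsPrevalentIn {X : Type*} [AddCommGroup X] [Module ℝ X] (𝓗 S : Set X) : Prop :=
  ∃ (k : ℕ) (v : Fin k → X),
    ∀ H ∈ 𝓗, ∀ᵐ c ∂(volume : Measure (Fin k → ℝ)), H + ∑ i, c i • v i ∈ S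

/-- sign conditions for semialgebraic sets -/
def sgnCond (s : Ordering) (x : ℝ) : Prop :=
  match s with
  | .lt => x < 0
  | .eq => x = 0
  | .gt => 0 < x

/-- A semialgebraic subset of `ℝ^ι`: a finite union of basic sets defined by
finitely many polynomial sign conditions. -/
def IsSemialgebraic {ι : Type*} [Fintype ι] (S : Set (ι → ℝ)) : Prop :=
  ∃ (N M : ℕ) (p : Fin N → Fin M → MvPolynomial ι ℝ) (sg : Fin N → Fin M → Ordering),
    S = ⋃ i : Fin N, ⋂ j : Fin M, {x | sgnCond (sg i j) (MvPolynomial.eval x (p i j))}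


/-- A Gevrey-`(α,β,L₁,L₂)` symplectic transformation from `𝕋ⁿ × U` to `𝕋ⁿ × V`:
smooth on `𝕋ⁿ × U`, commuting with the deck transformations `θ ↦ θ + m`,
preserving the canonical symplectic form, and whose components (in the sense of
torus maps) have finite Gevrey norm. -/
def IsGevreySymplectic (n : ℕ) (α β L₁ L₂ : ℝ) (U V : Set (En n))
    (Φ : Phase n → Phase n) : Prop :=
  ContDiffOn ℝ (⊤ : ℕ∞) Φ (univ ×ˢ U) ∧
  (∀ (θ I : En n) (m : Fin n → ℤ), Φ (θ + zlift n m, I) = Φ (θ, I) + (zlift n m, 0)) ∧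
  MapsTo Φ (univ ×ˢ U) (univ ×ˢ V) ∧
  (∀ x ∈ (univ ×ˢ U : Set (Phase n)), ∀ u v : Phase n,
    stdSymp n (fderiv ℝ Φ x u) (fderiv ℝ Φ x v) = stdSymp n u v) ∧
  ∃ M : ℝ, ∀ i : Fin n,
    GevreyBoundPhase n α β L₁ L₂ U (fun x => (Φ x).1 i - x.1 i) M ∧
    GevreyBoundPhase n α β L₁ L₂ U (fun x => (Φ x).2 i) M

/-- The vector of `∂^l` derivatives of the components of a map `ℝⁿ → ℝⁿ`. -/
def vecPDeriv (n : ℕ) (l : Fin n → ℕ) (g : En n → En n) (I : En n) : En n :=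
  (WithLp.equiv 2 (Fin n → ℝ)).symm fun j => pderivAct n l (fun y => g y j) I


namespace SteepProofAux

open Filter Topology

/-! ### Generalities on `listDeriv` -/

lemma listDeriv_nil {F : Type*} [NormedAddCommGroup F] [NormedSpace ℝ F] (f : F → ℝ) :
    listDeriv ([] : List F) f = f := rfl

lemma listDeriv_cons {F : Type*} [NormedAddCommGroup F] [NormedSpace ℝ F] (v : F) (vs : List F)
    (f : F → ℝ) : listDeriv (v :: vs) f = fun x => fderiv ℝ (listDeriv vs f) x v := rfl

lemma contDiffAt_listDeriv {F : Type*} [NormedAddCommGroup F] [NormedSpace ℝ F] :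
    ∀ (l : List F) (K : ℕ) (f : F → ℝ) (z : F), ContDiffAt ℝ (l.length + K : ℕ) f z →
      ContDiffAt ℝ (K : ℕ) (listDeriv l f) z := by
  intro l
  induction l with
  | nil =>
    intro K f z hf
    rw [listDeriv_nil]
    have he : (([] : List F).length + K : ℕ) = K := by simp
    rw [← he]; exact hf
  | cons v t ih =>
    intro K f z hf
    rw [listDeriv_cons]
    have h1 : ContDiffAt ℝ ((K + 1 : ℕ)) (listDeriv t f) z := by
      apply ih
      have he : (t.length + (K + 1) : ℕ) = ((v :: t).length + K : ℕ) := by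
        simp only [List.length_cons]
        try omega
      rw [he]; exact hf
    have h2 : ContDiffAt ℝ (K : ℕ) (fderiv ℝ (listDeriv t f)) z :=
      h1.fderiv_right (by exact_mod_cast le_rfl)
    exact (ContinuousLinearMap.apply ℝ ℝ v).contDiff.contDiffAt.comp z h2

lemma differentiableAt_listDeriv {F : Type*} [NormedAddCommGroup F] [NormedSpace ℝ F]
    (l : List F) (f : F → ℝ) (z : F) (hf : ContDiffAt ℝ (l.length + 1 : ℕ) f z) :
    DifferentiableAt ℝ (listDeriv l f) z :=
  (contDiffAt_listDeriv l 1 f z hf).differentiableAt (by simp)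

lemma listDeriv_ofFn {F : Type*} [NormedAddCommGroup F] [NormedSpace ℝ F] :
    ∀ (k : ℕ) (t : Fin k → F) (f : F → ℝ) (z : F), ContDiffAt ℝ (k : ℕ) f z →
      listDeriv (List.ofFn t) f z = iteratedFDeriv ℝ k f z t := by
  intro k
  induction k with
  | zero =>
    intro t f z _
    rw [List.ofFn_zero, listDeriv_nil, iteratedFDeriv_zero_apply]
  | succ k ih =>
    intro t f z hf
    simp only [List.ofFn_succ, listDeriv_cons]
    show (fderiv ℝ (listDeriv (List.ofFn (Fin.tail t)) f) z) (t 0) =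
      iteratedFDeriv ℝ (k + 1) f z t
    have hev : listDeriv (List.ofFn (Fin.tail t)) f =ᶠ[𝓝 z]
        fun w => iteratedFDeriv ℝ k f w (Fin.tail t) := by
      filter_upwards [hf.eventually (by simp)] with w hw
      exact ih (Fin.tail t) f w (hw.of_le (by exact_mod_cast Nat.le_succ k))
    rw [hev.fderiv_eq]
    have hdiff : DifferentiableAt ℝ (iteratedFDeriv ℝ k f) z :=
      ((hf.iteratedFDeriv_right (m := 1) (by exact_mod_cast by omega)).differentiableAt
        (by simp))
    rw [fderiv_continuousMultilinear_apply_const_apply hdiff]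
    rw [iteratedFDeriv_succ_apply_left]

lemma listDeriv_perm {F : Type*} [NormedAddCommGroup F] [NormedSpace ℝ F] {l₁ l₂ : List F}
    (hp : l₁.Perm l₂) :
    ∀ (f : F → ℝ) (z : F), ContDiffAt ℝ (l₁.length : ℕ) f z →
      listDeriv l₁ f z = listDeriv l₂ f z := by
  induction hp with
  | nil => intro f z _; rfl
  | @cons x t₁ t₂ p ih =>
    intro f z hf
    simp only [listDeriv_cons]
    have hev : listDeriv t₁ f =ᶠ[𝓝 z] listDeriv t₂ f := by
      filter_upwards [hf.eventually (by simp)] with w hw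
      refine ih f w (hw.of_le ?_)
      exact_mod_cast Nat.le_succ t₁.length
    rw [hev.fderiv_eq]
  | @swap x y t =>
    intro f z hf
    have hg : ContDiffAt ℝ (2 : ℕ) (listDeriv t f) z := by
      apply contDiffAt_listDeriv
      have he : (t.length + 2 : ℕ) = ((y :: x :: t).length : ℕ) := by
        simp only [List.length_cons]
        try omega
      rw [he]; exact hf
    have hc1 : DifferentiableAt ℝ (fderiv ℝ (listDeriv t f)) z :=
      (hg.fderiv_right (m := (1 : ℕ)) (by exact_mod_cast le_rfl)).differentiableAt
        (by simp)
    simp only [listDeriv_cons]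
    have hx : fderiv ℝ (fun w => fderiv ℝ (listDeriv t f) w x) z =
        (fderiv ℝ (fderiv ℝ (listDeriv t f)) z).flip x := by
      rw [fderiv_clm_apply hc1 (differentiableAt_const x)]
      simp
    have hy : fderiv ℝ (fun w => fderiv ℝ (listDeriv t f) w y) z =
        (fderiv ℝ (fderiv ℝ (listDeriv t f)) z).flip y := by
      rw [fderiv_clm_apply hc1 (differentiableAt_const y)]
      simp
    rw [hx, hy]
    simp only [ContinuousLinearMap.flip_apply]
    exact (hg.isSymmSndFDerivAt (by simp [minSmoothness_of_isRCLikeNormedField])).eq y x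
  | trans p₁ p₂ ih₁ ih₂ =>
    intro f z hf
    refine (ih₁ f z hf).trans (ih₂ f z ?_)
    rwa [p₁.length_eq] at hf

lemma listDeriv_sub {F : Type*} [NormedAddCommGroup F] [NormedSpace ℝ F] :
    ∀ (l : List F) (f g : F → ℝ) (z : F), ContDiffAt ℝ (l.length : ℕ) f z →
      ContDiffAt ℝ (l.length : ℕ) g z →
      listDeriv l (fun w => f w - g w) z = listDeriv l f z - listDeriv l g z := by
  intro l
  induction l with
  | nil => intro f g z _ _; rfl
  | cons v t ih =>
    intro f g z hf hg
    simp only [listDeriv_cons]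
    have hev : listDeriv t (fun w => f w - g w) =ᶠ[𝓝 z]
        fun w => listDeriv t f w - listDeriv t g w := by
      filter_upwards [hf.eventually (by simp), hg.eventually (by simp)] with w hw1 hw2
      exact ih f g w (hw1.of_le (by exact_mod_cast Nat.le_succ t.length))
        (hw2.of_le (by exact_mod_cast Nat.le_succ t.length))
    have hdf : DifferentiableAt ℝ (listDeriv t f) z := by
      apply differentiableAt_listDeriv
      exact hf.of_le (by exact_mod_cast le_rfl)
    have hdg : DifferentiableAt ℝ (listDeriv t g) z := by
      apply differentiableAt_listDeriv
      exact hg.of_le (by exact_mod_cast le_rfl)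
    rw [hev.fderiv_eq, fderiv_fun_sub hdf hdg]
    simp

lemma fderiv_comp_add_const' {F : Type*} [NormedAddCommGroup F] [NormedSpace ℝ F]
    (f : F → ℝ) (c z : F) : fderiv ℝ (fun w => f (w + c)) z = fderiv ℝ f (z + c) := by
  by_cases hf : DifferentiableAt ℝ f (z + c)
  · have h1 : HasFDerivAt (fun w => f (w + c)) (fderiv ℝ f (z + c)) z := by
      have h2 := hf.hasFDerivAt.comp z ((hasFDerivAt_id z).add_const c)
      exact h2
    exact h1.fderiv
  · rw [fderiv_zero_of_not_differentiableAt hf]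
    rw [fderiv_zero_of_not_differentiableAt ?_]
    intro hcontra
    apply hf
    have hinner : DifferentiableAt ℝ (fun w : F => w + -c) (z + c) :=
      ((hasFDerivAt_id (z + c)).add_const (-c)).differentiableAt
    have houter : DifferentiableAt ℝ (fun w => f (w + c)) ((fun w : F => w + -c) (z + c)) := by
      simpa using hcontra
    have h2 := DifferentiableAt.comp (z + c) houter hinner
    have h3 : ((fun w => f (w + c)) ∘ fun w : F => w + -c) = f := by
      funext w; simp
    rwa [h3] at h2

lemma listDeriv_comp_add_const {F : Type*} [NormedAddCommGroup F] [NormedSpace ℝ F] :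
    ∀ (l : List F) (f : F → ℝ) (c : F),
      listDeriv l (fun w => f (w + c)) = fun z => listDeriv l f (z + c) := by
  intro l
  induction l with
  | nil => intro f c; rfl
  | cons v t ih =>
    intro f c
    funext z
    simp only [listDeriv_cons]
    rw [ih f c, fderiv_comp_add_const']

/-! ### Monomials -/

def mon (n : ℕ) (d : Fin n → ℕ) : En n → ℝ := fun x => ∏ i, x i ^ d i

lemma mon_apply {n : ℕ} (d : Fin n → ℕ) (x : En n) : mon n d x = ∏ i, x i ^ d i := rfl

lemma contDiff_mon {n : ℕ} {N : ℕ∞} (d : Fin n → ℕ) : ContDiff ℝ N (mon n d) := by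
  have h : ∀ s : Finset (Fin n), ContDiff ℝ N fun x : En n => ∏ i ∈ s, x i ^ d i := by
    intro s
    induction s using Finset.induction with
    | empty => simpa using contDiff_const
    | @insert a s has ih =>
      have h1 : ContDiff ℝ N fun x : En n => x a ^ d a :=
        (EuclideanSpace.proj (𝕜 := ℝ) a).contDiff.pow _
      simpa only [Finset.prod_insert has] using h1.mul ih
  exact h Finset.univ

lemma differentiable_mon {n : ℕ} (d : Fin n → ℕ) : Differentiable ℝ (mon n d) :=
  (contDiff_mon (N := 1) d).differentiable (by simp)

lemma hasFDerivAt_mon {n : ℕ} (d : Fin n → ℕ) (z : En n) :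
    HasFDerivAt (mon n d)
      (∑ i, (∏ j ∈ Finset.univ.erase i, z j ^ d j) •
        (((d i : ℝ) * z i ^ (d i - 1)) • (EuclideanSpace.proj (𝕜 := ℝ) i))) z := by
  have h : ∀ i : Fin n, HasFDerivAt (fun x : En n => x i ^ d i)
      (((d i : ℝ) * z i ^ (d i - 1)) • (EuclideanSpace.proj (𝕜 := ℝ) i)) z := by
    intro i
    have h1 := (hasDerivAt_pow (d i) (z i)).comp_hasFDerivAt z
      (EuclideanSpace.proj (𝕜 := ℝ) i).hasFDerivAt
    exact h1
  have h2 := HasFDerivAt.finset_prod (u := Finset.univ)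
    (g := fun i (x : En n) => x i ^ d i) (fun i _ => h i)
  show HasFDerivAt (fun x : En n => ∏ i, x i ^ d i) _ z
  simpa using h2

lemma fderiv_mon_apply {n : ℕ} (d : Fin n → ℕ) (z : En n) (j : Fin n) :
    fderiv ℝ (mon n d) z (bvec n j) =
      ((d j : ℕ) : ℝ) * mon n (fun i => d i - if i = j then 1 else 0) z := by
  rw [(hasFDerivAt_mon d z).fderiv, ContinuousLinearMap.sum_apply]
  have hb : ∀ i : Fin n, (bvec n j) i = if i = j then (1 : ℝ) else 0 := by
    intro i
    simp [bvec, EuclideanSpace.single_apply]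
  rw [Finset.sum_eq_single j]
  · have h1 : (EuclideanSpace.proj (𝕜 := ℝ) j) (bvec n j) = 1 := by
      show (bvec n j) j = 1
      rw [hb j]; simp
    simp only [ContinuousLinearMap.smul_apply, h1, smul_eq_mul, mul_one]
    rw [mon_apply]
    rw [← Finset.mul_prod_erase Finset.univ
      (fun i => z i ^ (d i - if i = j then 1 else 0)) (Finset.mem_univ j)]
    have h2 : ∀ i ∈ Finset.univ.erase j,
        z i ^ (d i - if i = j then 1 else 0) = z i ^ d i := by
      intro i hi
      have : i ≠ j := (Finset.mem_erase.mp hi).1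
      simp [this]
    rw [Finset.prod_congr rfl h2]
    simp
    ring
  · intro i _ hij
    have h1 : (EuclideanSpace.proj (𝕜 := ℝ) i) (bvec n j) = 0 := by
      show (bvec n j) i = 0
      rw [hb i]; simp [hij]
    simp [h1]
  · intro hj; exact absurd (Finset.mem_univ j) hj

/-! ### Iterated derivatives of polynomials -/

lemma listDeriv_evalP2 {n m : ℕ} (P : P2Space n m) :
    ∀ t : List (Fin n),
      listDeriv (t.map (bvec n)) (evalP2 P) = fun z =>
        ∑ d : MonIdx n m,
          P d * ((∏ i, ((d.1 i : ℕ)).descFactorial (t.count i) : ℕ) : ℝ) *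
            mon n (fun i => (d.1 i : ℕ) - t.count i) z := by
  intro t
  induction t with
  | nil =>
    funext z
    show evalP2 P z = _
    unfold evalP2
    refine Finset.sum_congr rfl fun d _ => ?_
    simp [mon_apply]
  | cons j t ih =>
    funext z
    rw [List.map_cons]
    simp only [listDeriv_cons]
    rw [ih]
    rw [fderiv_fun_sum (fun d _ =>
      ((differentiable_mon _ z).const_mul (P d * _)))]
    rw [ContinuousLinearMap.sum_apply]
    refine Finset.sum_congr rfl fun d _ => ?_
    rw [fderiv_const_mul (differentiable_mon _ z) _]
    rw [ContinuousLinearMap.smul_apply, smul_eq_mul, fderiv_mon_apply]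
    have hexp : (fun i => ((d.1 i : ℕ) - t.count i) - if i = j then 1 else 0)
        = fun i => (d.1 i : ℕ) - (j :: t).count i := by
      funext i
      by_cases hij : i = j
      · simp [List.count_cons, hij] <;> omega
      · simp [List.count_cons, hij, Ne.symm hij] <;> omega
    rw [hexp]
    have hcoef : (∏ i, ((d.1 i : ℕ)).descFactorial ((j :: t).count i))
        = ((d.1 j : ℕ) - t.count j) * ∏ i, ((d.1 i : ℕ)).descFactorial (t.count i) := by
      rw [← Finset.mul_prod_erase Finset.univ
        (fun i => ((d.1 i : ℕ)).descFactorial ((j :: t).count i)) (Finset.mem_univ j),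
        ← Finset.mul_prod_erase Finset.univ
        (fun i => ((d.1 i : ℕ)).descFactorial (t.count i)) (Finset.mem_univ j)]
      have h1 : (j :: t).count j = t.count j + 1 := by simp [List.count_cons]
      have h2 : ∀ i ∈ Finset.univ.erase j,
          ((d.1 i : ℕ)).descFactorial ((j :: t).count i)
            = ((d.1 i : ℕ)).descFactorial (t.count i) := by
        intro i hi
        have hne : i ≠ j := (Finset.mem_erase.mp hi).1
        simp [List.count_cons, hne, Ne.symm hne]
      rw [Finset.prod_congr rfl h2, h1, Nat.descFactorial_succ]
      ring
    rw [hcoef]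
    push_cast
    ring

lemma listDeriv_evalP2_apply {n m : ℕ} (P : P2Space n m) (t : List (Fin n)) (z : En n) :
    listDeriv (t.map (bvec n)) (evalP2 P) z =
        ∑ d : MonIdx n m,
          P d * ((∏ i, ((d.1 i : ℕ)).descFactorial (t.count i) : ℕ) : ℝ) *
            mon n (fun i => (d.1 i : ℕ) - t.count i) z := by
  rw [listDeriv_evalP2]

lemma mon_apply_zero_of_ne {n : ℕ} (e : Fin n → ℕ) (he : ∃ i, e i ≠ 0) :
    mon n e 0 = 0 := by
  obtain ⟨i, hi⟩ := he
  refine Finset.prod_eq_zero (Finset.mem_univ i) ?_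
  have h0 : (0 : En n) i = 0 := rfl
  rw [h0, zero_pow hi]

lemma mon_apply_zero_of_eq {n : ℕ} (e : Fin n → ℕ) (he : ∀ i, e i = 0) :
    mon n e 0 = 1 := by
  rw [mon_apply]
  refine Finset.prod_eq_one fun i _ => ?_
  rw [he i, pow_zero]

lemma sum_count {n : ℕ} (tl : List (Fin n)) : ∑ i, tl.count i = tl.length := by
  induction tl with
  | nil => simp
  | cons a tl ih =>
    have h1 : ∀ i : Fin n, (a :: tl).count i = tl.count i + if a = i then 1 else 0 := by
      intro i
      rw [List.count_cons]
      by_cases hia : i = a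
      · subst hia; simp
      · simp [hia, Ne.symm hia]
    simp only [h1, Finset.sum_add_distrib, ih]
    simp [List.length_cons]

lemma listDeriv_evalP2_high {n m : ℕ} (P : P2Space n m) (t : List (Fin n))
    (ht : m < t.length) (z : En n) :
    listDeriv (t.map (bvec n)) (evalP2 P) z = 0 := by
  rw [listDeriv_evalP2]
  refine Finset.sum_eq_zero fun d _ => ?_
  have hlt : ∃ i, (d.1 i : ℕ) < t.count i := by
    by_contra hcon
    push_neg at hcon
    have h1 : t.length ≤ m := by
      calc t.length = ∑ i, t.count i := (sum_count t).symm
        _ ≤ ∑ i, (d.1 i : ℕ) := Finset.sum_le_sum fun i _ => hcon i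
        _ ≤ m := d.2.2
    omega
  obtain ⟨i, hi⟩ := hlt
  rw [Finset.prod_eq_zero (Finset.mem_univ i) (Nat.descFactorial_eq_zero_iff_lt.mpr hi)]
  simp

lemma listDeriv_evalP2_low {n m : ℕ} (P : P2Space n m) (t : List (Fin n))
    (ht : t.length < 2) :
    listDeriv (t.map (bvec n)) (evalP2 P) 0 = 0 := by
  rw [listDeriv_evalP2]
  refine Finset.sum_eq_zero fun d _ => ?_
  by_cases hc : ∃ i, (d.1 i : ℕ) < t.count i
  · obtain ⟨i, hi⟩ := hc
    rw [Finset.prod_eq_zero (Finset.mem_univ i) (Nat.descFactorial_eq_zero_iff_lt.mpr hi)]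
    simp
  · push_neg at hc
    have hne : ∃ i, (d.1 i : ℕ) - t.count i ≠ 0 := by
      by_contra hcon
      push_neg at hcon
      have heq : ∀ i, (d.1 i : ℕ) = t.count i := fun i =>
        le_antisymm (by have := hcon i; omega) (hc i)
      have h2 := d.2.1
      have h3 : ∑ i, (d.1 i : ℕ) = t.length := by
        rw [Finset.sum_congr rfl fun i _ => heq i, sum_count]
      omega
    rw [mon_apply_zero_of_ne _ hne]
    ring

lemma listDeriv_evalP2_diag {n m : ℕ} (P : P2Space n m) (t : List (Fin n)) (d₀ : MonIdx n m)
    (hd₀ : ∀ i, (d₀.1 i : ℕ) = t.count i) :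
    listDeriv (t.map (bvec n)) (evalP2 P) 0
      = P d₀ * (midxFact (fun i => t.count i) : ℝ) := by
  rw [listDeriv_evalP2_apply]
  rw [Finset.sum_eq_single d₀]
  · have h1 : (∏ i, ((d₀.1 i : ℕ)).descFactorial (t.count i))
        = midxFact (fun i => t.count i) := by
      unfold midxFact
      exact Finset.prod_congr rfl fun i _ => by rw [hd₀ i, Nat.descFactorial_self]
    rw [h1, mon_apply_zero_of_eq _ (fun i => by rw [hd₀ i]; omega)]
    ring
  · intro d _ hne
    by_cases hc : ∃ i, (d.1 i : ℕ) < t.count i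
    · obtain ⟨i, hi⟩ := hc
      rw [Finset.prod_eq_zero (Finset.mem_univ i) (Nat.descFactorial_eq_zero_iff_lt.mpr hi)]
      simp
    · push_neg at hc
      have hne2 : ∃ i, (d.1 i : ℕ) - t.count i ≠ 0 := by
        by_contra hcon
        push_neg at hcon
        apply hne
        have heq : ∀ i, (d.1 i : ℕ) = t.count i := fun i =>
          le_antisymm (by have := hcon i; omega) (hc i)
        apply Subtype.ext
        funext i
        exact Fin.ext (by rw [heq i, ← hd₀ i])
      rw [mon_apply_zero_of_ne _ hne2]
      ring
  · intro hmem; exact absurd (Finset.mem_univ d₀) hmem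

lemma contDiff_evalP2 {n m : ℕ} {N : ℕ∞} (P : P2Space n m) : ContDiff ℝ N (evalP2 P) := by
  unfold evalP2
  refine ContDiff.sum fun d _ => ?_
  exact contDiff_const.mul (contDiff_mon (fun i => (d.1 i : ℕ)))

/-! ### `idxList` and permutations -/

lemma idxList_eq_map {n : ℕ} {F : Type*} (k : Fin n → ℕ) (b : Fin n → F) :
    idxList n k b = (idxList n k (fun i => i)).map b := by
  unfold idxList
  generalize List.finRange n = l
  induction l with
  | nil => rfl
  | cons a l ih => simp [List.map_append, List.map_replicate, ih]

lemma count_idxList {n : ℕ} (k : Fin n → ℕ) (j : Fin n) :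
    (idxList n k (fun i => i)).count j = k j := by
  unfold idxList
  have h : ∀ l : List (Fin n),
      (l.foldr (fun i acc => List.replicate (k i) i ++ acc) []).count j
        = (l.map fun i => if i = j then k i else 0).sum := by
    intro l
    induction l with
    | nil => simp
    | cons a l ih =>
      simp only [List.foldr_cons, List.count_append, List.map_cons, List.sum_cons, ih]
      congr 1
      rw [List.count_replicate]
      by_cases hia : a = j
      · subst hia; simp
      · simp [hia]
  rw [h, ← List.ofFn_eq_map, List.sum_ofFn]
  simp

lemma length_idxList {n : ℕ} {F : Type*} (k : Fin n → ℕ) (b : Fin n → F) :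
    (idxList n k b).length = midxAbs k := by
  unfold idxList midxAbs
  have h : ∀ l : List (Fin n),
      (l.foldr (fun i acc => List.replicate (k i) (b i) ++ acc) []).length
        = (l.map k).sum := by
    intro l
    induction l with
    | nil => rfl
    | cons a l ih => simp [ih, Function.comp_def]
  rw [h, ← List.ofFn_eq_map, List.sum_ofFn]

lemma perm_map_idxList {n : ℕ} (t : List (Fin n)) :
    (t.map (bvec n)).Perm (idxList n (fun i => t.count i) (bvec n)) := by
  rw [idxList_eq_map]
  refine List.Perm.map _ ?_
  rw [List.perm_iff_count]
  intro a
  rw [count_idxList]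

/-! ### Multilinear maps vanishing on basis vectors -/

lemma cml_ext_zero {n k : ℕ} {G : Type*} [NormedAddCommGroup G] [NormedSpace ℝ G]
    (ψ : ContinuousMultilinearMap ℝ (fun _ : Fin k => En n) G)
    (hψ : ∀ t : Fin k → Fin n, (ψ fun i => bvec n (t i)) = 0) : ψ = 0 := by
  apply ContinuousMultilinearMap.toMultilinearMap_injective
  refine Module.Basis.ext_multilinear (fun _ => (EuclideanSpace.basisFun (Fin n) ℝ).toBasis) fun v => ?_
  have hb : ∀ i : Fin k, ((EuclideanSpace.basisFun (Fin n) ℝ).toBasis (v i)) = bvec n (v i) := by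
    intro i
    rw [OrthonormalBasis.coe_toBasis, EuclideanSpace.basisFun_apply]
    rfl
  show (ψ fun i => (EuclideanSpace.basisFun (Fin n) ℝ).toBasis (v i)) = _
  simp only [hb]
  rw [hψ v]
  rfl

/-! ### Functions with vanishing derivatives are small -/

universe uE

lemma vanish_bound {E : Type uE} [NormedAddCommGroup E] [NormedSpace ℝ E] :
    ∀ M : ℕ, 1 ≤ M → ∀ (G : Type uE) (instG : NormedAddCommGroup G)
      (instG2 : @NormedSpace ℝ G _ instG.toSeminormedAddCommGroup) (F : E → G) (a : E) (ρ K : ℝ),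
      (∀ z ∈ Metric.ball a ρ, ContDiffAt ℝ (M : ℕ) F z) →
      (∀ j : ℕ, 1 ≤ j → j < M → iteratedFDeriv ℝ j F a = 0) →
      (∀ z ∈ Metric.ball a ρ, ‖iteratedFDeriv ℝ M F z‖ ≤ K) →
      ∀ x ∈ Metric.ball a ρ, ‖F x - F a‖ ≤ K * ‖x - a‖ ^ M := by
  intro M hM
  induction M, hM using Nat.le_induction with
  | base =>
    intro G instG instG2 F a ρ K hF h0 hK x hx
    have ha : a ∈ Metric.ball a ρ :=
      Metric.mem_ball_self (lt_of_le_of_lt dist_nonneg (Metric.mem_ball.mp hx))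
    have hb : ∀ z ∈ Metric.ball a ρ, ‖fderiv ℝ F z‖ ≤ K := by
      intro z hz
      have h1 : ‖fderiv ℝ F z‖ = ‖iteratedFDeriv ℝ 1 F z‖ := by
        rw [← norm_iteratedFDeriv_fderiv (n := 0), norm_iteratedFDeriv_zero]
      rw [h1]; exact hK z hz
    have h2 := Convex.norm_image_sub_le_of_norm_fderiv_le
      (fun z hz => (hF z hz).differentiableAt (by simp))
      hb (convex_ball a ρ) ha hx
    simpa using h2
  | succ M hM1 ih =>
    intro G instG instG2 F a ρ K hF h0 hK x hx
    have hxball := Metric.mem_ball.mp hx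
    have hFa : fderiv ℝ F a = 0 := by
      have h1 : ‖fderiv ℝ F a‖ = ‖iteratedFDeriv ℝ 1 F a‖ := by
        rw [← norm_iteratedFDeriv_fderiv (n := 0), norm_iteratedFDeriv_zero]
      have h2 := h0 1 le_rfl (by omega)
      have h3 : ‖fderiv ℝ F a‖ = 0 := by rw [h1, h2, norm_zero]
      exact norm_eq_zero.mp h3
    have hd : ∀ z ∈ Metric.ball a ρ, ‖fderiv ℝ F z‖ ≤ K * ‖z - a‖ ^ M := by
      intro z hz
      have h4 := ih (E →L[ℝ] G) _ _ (fderiv ℝ F) a ρ K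
        (fun w hw => (hF w hw).fderiv_right (m := (M : ℕ)) (by norm_cast))
        (fun j hj1 hj2 => by
          have h5 := h0 (j + 1) (by omega) (by omega)
          refine norm_eq_zero.mp ?_
          rw [norm_iteratedFDeriv_fderiv, h5, norm_zero])
        (fun w hw => by rw [norm_iteratedFDeriv_fderiv]; exact hK w hw)
        z hz
      calc ‖fderiv ℝ F z‖ = ‖fderiv ℝ F z - fderiv ℝ F a‖ := by rw [hFa, sub_zero]
        _ ≤ K * ‖z - a‖ ^ M := h4
    have hK0 : 0 ≤ K := le_trans (norm_nonneg _) (hK x hx)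
    have hsub : Metric.closedBall a ‖x - a‖ ⊆ Metric.ball a ρ :=
      Metric.closedBall_subset_ball (by rwa [← dist_eq_norm])
    have h6 := Convex.norm_image_sub_le_of_norm_fderiv_le
      (f := F) (C := K * ‖x - a‖ ^ M) (s := Metric.closedBall a ‖x - a‖)
      (fun z hz => (hF z (hsub hz)).differentiableAt
        (by simp))
      (fun z hz => by
        refine le_trans (hd z (hsub hz)) ?_
        have h7 : ‖z - a‖ ≤ ‖x - a‖ := by
          have := Metric.mem_closedBall.mp hz
          rwa [dist_eq_norm] at this
        exact mul_le_mul_of_nonneg_left (pow_le_pow_left₀ (norm_nonneg _) h7 M) hK0)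
      (convex_closedBall a ‖x - a‖)
      (Metric.mem_closedBall_self (norm_nonneg _))
      (by rw [Metric.mem_closedBall, dist_eq_norm])
    calc ‖F x - F a‖ ≤ K * ‖x - a‖ ^ M * ‖x - a‖ := h6
      _ = K * ‖x - a‖ ^ (M + 1) := by ring

/-! ### Restriction to submodules -/

lemma fderiv_restrict {n : ℕ} (f : En n → ℝ) (c : En n) (Λ : Submodule ℝ (En n)) (x : Λ)
    (hf : DifferentiableAt ℝ f (c + ↑x)) :
    fderiv ℝ (fun y : Λ => f (c + ↑y)) x = (fderiv ℝ f (c + ↑x)).comp Λ.subtypeL := by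
  have h1 : HasFDerivAt (fun y : Λ => c + (y : En n)) Λ.subtypeL x :=
    (Λ.subtypeL.hasFDerivAt).const_add c
  exact (hf.hasFDerivAt.comp x h1).fderiv

lemma fderiv_restrict0 {n : ℕ} (f : En n → ℝ) (Λ : Submodule ℝ (En n)) (x : Λ)
    (hf : DifferentiableAt ℝ f ↑x) :
    fderiv ℝ (fun y : Λ => f ↑y) x = (fderiv ℝ f ↑x).comp Λ.subtypeL :=
  (hf.hasFDerivAt.comp x Λ.subtypeL.hasFDerivAt).fderiv

/-! ### The gradient of `evalP2` at the origin vanishes -/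

lemma euclid_eq_sum_bvec {n : ℕ} (v : En n) : v = ∑ i, v i • bvec n i := by
  have h := ((EuclideanSpace.basisFun (Fin n) ℝ).sum_repr v).symm
  convert h using 2 with i
  rw [EuclideanSpace.basisFun_repr, EuclideanSpace.basisFun_apply]
  rfl

lemma fderiv_evalP2_zero {n m : ℕ} (P : P2Space n m) :
    fderiv ℝ (evalP2 P) (0 : En n) = 0 := by
  have hdir : ∀ j : Fin n, fderiv ℝ (evalP2 P) 0 (bvec n j) = 0 := by
    intro j
    have h1 : listDeriv ([j].map (bvec n)) (evalP2 P) 0 = 0 :=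
      listDeriv_evalP2_low P [j] (by simp)
    simpa only [List.map_cons, List.map_nil, listDeriv_cons, listDeriv_nil] using h1
  refine ContinuousLinearMap.ext fun v => ?_
  conv_lhs => rw [euclid_eq_sum_bvec v]
  rw [map_sum]
  simp [hdir]

end SteepProofAux


open SteepProofAux

set_option maxHeartbeats 2000000 in
/-- **Proposition 2.** If `h` is of class `C^{m₀+1}` on `B_r̄` (`m₀ = [n²/2 + 2]`), with
`‖∇h(0)‖ ≥ ϖ > 0` and `(ρ',C',δ')`-stably steep Taylor polynomial `T₀^{m₀} h`, then for
every sufficiently small `r > 0` the function `h` is `(ϖ/2, C'/2, r, m₀−1)`-steep on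
`B_{2r}`. -/
theorem steep_of_stably_steep_taylor_at_origin
    (n : ℕ) (hn : 2 ≤ n) (rbar ϖ ρ' C' δ' : ℝ)
    (hrbar : 0 < rbar) (hϖ : 0 < ϖ) (hρ' : 0 < ρ') (hC' : 0 < C') (hδ' : 0 < δ')
    (h : En n → ℝ)
    (hreg : ContDiffOn ℝ (n ^ 2 / 2 + 2 + 1 : ℕ) h (ball (0 : En n) rbar))
    (hgrad : ϖ ≤ ‖gradient h 0‖)
    (hss : StablySteepWith n (n ^ 2 / 2 + 2) ρ' C' δ' (taylorP2 n (n ^ 2 / 2 + 2) h 0)) :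
    ∃ r₀ : ℝ, 0 < r₀ ∧ ∀ r : ℝ, 0 < r → r ≤ r₀ →
      SteepOn n h (ball (0 : En n) (2 * r)) (ϖ / 2) (C' / 2) r
        ((n ^ 2 / 2 + 2 : ℕ) - 1 : ℝ) := by
  classical
  set M : ℕ := n ^ 2 / 2 + 2 with hMdef
  have hM2 : 2 ≤ M := by omega
  have hball : ∀ z : En n, z ∈ ball (0 : En n) rbar → ContDiffAt ℝ ((M + 1 : ℕ)) h z :=
    fun z hz => hreg.contDiffAt (isOpen_ball.mem_nhds hz)
  have h0ball : (0 : En n) ∈ ball (0 : En n) rbar := mem_ball_self hrbar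
  -- uniform bound for the (M+1)-st derivative on a compact subball
  have hcont : ContinuousOn (iteratedFDeriv ℝ (M + 1) h) (ball (0 : En n) rbar) := by
    intro z hz
    exact (((hball z hz).iteratedFDeriv_right (m := 0) (i := M + 1)
      (by norm_cast; omega)).continuousAt).continuousWithinAt
  obtain ⟨K₀, hK₀⟩ := (isCompact_closedBall (0 : En n) (3 * rbar / 4)).exists_bound_of_continuousOn
    (hcont.mono (closedBall_subset_ball (by linarith)))
  set K : ℝ := max K₀ 1 with hKdef
  have hKpos : (0 : ℝ) < K := lt_of_lt_of_le one_pos (le_max_right _ _)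
  have hKb : ∀ z ∈ closedBall (0 : En n) (3 * rbar / 4), ‖iteratedFDeriv ℝ (M + 1) h z‖ ≤ K :=
    fun z hz => le_trans (hK₀ z hz) (le_max_left _ _)
  -- continuity of the first derivative at 0
  obtain ⟨r₂, hr₂pos, hr₂⟩ : ∃ r₂ > 0, ∀ I : En n, dist I 0 < r₂ →
      ‖fderiv ℝ h I - fderiv ℝ h 0‖ < ϖ / 2 := by
    have hc : ContinuousAt (fderiv ℝ h) 0 :=
      ((hball 0 h0ball).fderiv_right (m := 0) (by norm_cast; omega)).continuousAt
    obtain ⟨δ, hδ, hb⟩ := Metric.continuousAt_iff.mp hc (ϖ / 2) (by linarith)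
    exact ⟨δ, hδ, fun I hI => by have h2 := hb hI; rwa [dist_eq_norm] at h2⟩
  -- continuity of the Taylor coefficients at 0
  obtain ⟨r₃, hr₃pos, hr₃⟩ : ∃ r₃ > 0, ∀ I : En n, dist I 0 < r₃ →
      ‖taylorP2 n M h I - taylorP2 n M h 0‖ < ρ' := by
    have hc : ContinuousAt (fun I => taylorP2 n M h I) 0 := by
      rw [continuousAt_pi]
      intro d
      show ContinuousAt (fun I => pderivAct n (fun i => (d.1 i : ℕ)) h I /
        (midxFact (fun i => (d.1 i : ℕ)) : ℝ)) 0
      apply ContinuousAt.div_const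
      have hlen : (idxList n (fun i => (d.1 i : ℕ)) (bvec n)).length + 0 ≤ M + 1 := by
        rw [length_idxList]
        have h3 : midxAbs (fun i => (d.1 i : ℕ)) ≤ M := d.2.2
        omega
      have h3 : ContDiffAt ℝ ((0 : ℕ)) (listDeriv (idxList n (fun i => (d.1 i : ℕ)) (bvec n)) h) 0 := by
        apply contDiffAt_listDeriv
        exact (hball 0 h0ball).of_le (by exact_mod_cast hlen)
      exact h3.continuousAt
    obtain ⟨δ, hδ, hb⟩ := Metric.continuousAt_iff.mp hc ρ' hρ'
    exact ⟨δ, hδ, fun I hI => by have h2 := hb hI; rwa [dist_eq_norm] at h2⟩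
  -- the threshold
  refine ⟨min (min (rbar / 16) δ') (min (min (r₂ / 2) (r₃ / 2)) (C' / (2 * K))), ?_, ?_⟩
  · refine lt_min (lt_min (by linarith) hδ') (lt_min (lt_min (by linarith) (by linarith)) ?_)
    positivity
  intro r hrpos hrle I hImem
  have hrbar16 : r ≤ rbar / 16 := le_trans hrle (le_trans (min_le_left _ _) (min_le_left _ _))
  have hrδ' : r ≤ δ' := le_trans hrle (le_trans (min_le_left _ _) (min_le_right _ _))
  have hrr₂ : r ≤ r₂ / 2 :=
    le_trans hrle (le_trans (min_le_right _ _) (le_trans (min_le_left _ _) (min_le_left _ _)))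
  have hrr₃ : r ≤ r₃ / 2 :=
    le_trans hrle (le_trans (min_le_right _ _) (le_trans (min_le_left _ _) (min_le_right _ _)))
  have hrK : r ≤ C' / (2 * K) := le_trans hrle (le_trans (min_le_right _ _) (min_le_right _ _))
  have hInorm : ‖I‖ < 2 * r := by
    have h2 := mem_ball.mp hImem
    rwa [dist_zero_right] at h2
  have hIball : I ∈ ball (0 : En n) rbar := by
    rw [mem_ball, dist_zero_right]; linarith
  have hgeo : ball I (rbar / 8) ⊆ ball (0 : En n) rbar := by
    intro z hz
    have h2 : ‖z - I‖ < rbar / 8 := by have := mem_ball.mp hz; rwa [dist_eq_norm] at this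
    have h3 : ‖z‖ ≤ ‖z - I‖ + ‖I‖ := by
      have h4 := norm_add_le (z - I) I
      rwa [sub_add_cancel] at h4
    rw [mem_ball, dist_zero_right]; linarith
  constructor
  · -- lower bound for the gradient
    have h2 := hr₂ I (by rw [dist_zero_right]; linarith)
    have h3 : ‖gradient h I - gradient h 0‖ = ‖fderiv ℝ h I - fderiv ℝ h 0‖ := by
      show ‖(InnerProductSpace.toDual ℝ (En n)).symm (fderiv ℝ h I)
        - (InnerProductSpace.toDual ℝ (En n)).symm (fderiv ℝ h 0)‖ = _
      rw [← map_sub, LinearIsometryEquiv.norm_map]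
    have h4 : ‖gradient h 0‖ - ‖gradient h I‖ ≤ ‖gradient h I - gradient h 0‖ := by
      have h5 := norm_sub_norm_le (gradient h 0) (gradient h I)
      rwa [norm_sub_rev] at h5
    rw [h3] at h4
    linarith
  · intro l hl1 hl2 Λ hΛ ξ hξpos hξr
    have hPclose : ‖taylorP2 n M h I - taylorP2 n M h 0‖ < ρ' :=
      hr₃ I (by rw [dist_zero_right]; linarith)
    obtain ⟨η, hη0, hηξ, hηP⟩ := hss l hl1 hl2 (taylorP2 n M h I) hPclose Λ hΛ ξ hξpos
      (by linarith)
    refine ⟨η, hη0, hηξ, ?_⟩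
    intro x hxnorm
    set q : En n → ℝ := evalP2 (taylorP2 n M h I) with hqdef
    set p : En n → ℝ := fun z => q (z + -I) with hpdef
    set gI : En n → ℝ := fun z => h z - p z with hgIdef
    have hxle : ‖(x : En n)‖ ≤ ξ := by
      have : ‖(x : En n)‖ = η := hxnorm
      rw [this]; exact hηξ
    -- smoothness of p
    have hpcon : ∀ N : ℕ, ContDiff ℝ (N : ℕ) p := by
      intro N
      have h7 : ContDiff ℝ ((N : ℕ∞)) p := by
        rw [hpdef, hqdef]
        exact (contDiff_evalP2 _).comp (contDiff_id.add contDiff_const)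
      exact h7.of_le (by exact_mod_cast le_rfl)
    have hpcd : ∀ (N : ℕ) (z : En n), ContDiffAt ℝ ((N : ℕ)) p z :=
      fun N z => (hpcon N).contDiffAt
    have hgIcd : ∀ k : ℕ, k ≤ M + 1 → ∀ z ∈ ball (0 : En n) rbar,
        ContDiffAt ℝ ((k : ℕ)) gI z := by
      intro k hk z hz
      rw [hgIdef]
      exact ((hball z hz).of_le (by exact_mod_cast hk)).sub (hpcd k z)
    -- vanishing of intermediate derivatives of gI at I
    have hvan : ∀ k : ℕ, 2 ≤ k → k ≤ M → iteratedFDeriv ℝ k gI I = 0 := by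
      intro k hk2 hkM
      apply cml_ext_zero
      intro t
      rw [← listDeriv_ofFn k (fun i => bvec n (t i)) gI I (hgIcd k (by omega) I hIball)]
      rw [show (List.ofFn fun i => bvec n (t i)) = (List.ofFn t).map (bvec n) from by
        rw [List.map_ofFn]; rfl]
      set tl : List (Fin n) := List.ofFn t with htldef
      have hlen : tl.length = k := by simp [htldef]
      have hlen2 : (tl.map (bvec n)).length = k := by simp [hlen]
      have hsplit := listDeriv_sub (tl.map (bvec n)) h p I
        (by rw [hlen2]; exact (hball I hIball).of_le (by exact_mod_cast by omega))
        (by rw [hlen2]; exact hpcd k I)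
      rw [hgIdef, hsplit]
      have hperm := listDeriv_perm (perm_map_idxList tl) h I
        (by rw [hlen2]; exact (hball I hIball).of_le (by exact_mod_cast by omega))
      have hptrans : listDeriv (tl.map (bvec n)) p I
          = listDeriv (tl.map (bvec n)) q (I + -I) := by
        rw [hpdef, listDeriv_comp_add_const]
      rw [hperm, hptrans, show I + -I = (0 : En n) by simp]
      have hcntlt : ∀ i, tl.count i < M + 1 := fun i =>
        Nat.lt_succ_of_le (le_trans (le_trans List.count_le_length (le_of_eq hlen)) hkM)
      have hsum2 : (∑ i, ((⟨tl.count i, hcntlt i⟩ : Fin (M + 1)) : ℕ)) = k := by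
        simpa using by rw [sum_count, hlen]
      have hdiag := listDeriv_evalP2_diag (taylorP2 n M h I) tl
        ⟨fun i => ⟨tl.count i, hcntlt i⟩, by rw [hsum2]; omega, by rw [hsum2]; omega⟩
        (fun i => rfl)
      rw [hqdef, hdiag]
      have hPd₀ : taylorP2 n M h I ⟨fun i => ⟨tl.count i, hcntlt i⟩, by rw [hsum2]; omega,
            by rw [hsum2]; omega⟩
          = pderivAct n (fun i => tl.count i) h I / (midxFact (fun i => tl.count i) : ℝ) := rfl
      rw [hPd₀, div_mul_cancel₀]
      · exact sub_eq_zero_of_eq rfl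
      · have h8 : 0 < midxFact (fun i => tl.count i) :=
          Finset.prod_pos fun i _ => Nat.factorial_pos _
        exact_mod_cast h8.ne'
    -- the (M+1)-st derivative of p vanishes
    have hpzero : ∀ z : En n, iteratedFDeriv ℝ (M + 1) p z = 0 := by
      intro z
      apply cml_ext_zero
      intro t
      rw [← listDeriv_ofFn (M + 1) (fun i => bvec n (t i)) p z (hpcd (M + 1) z)]
      rw [show (List.ofFn fun i => bvec n (t i)) = (List.ofFn t).map (bvec n) from by
        rw [List.map_ofFn]; rfl]
      rw [hpdef, listDeriv_comp_add_const]
      rw [hqdef]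
      exact listDeriv_evalP2_high _ (List.ofFn t) (by rw [List.length_ofFn]; omega) _
    -- uniform bound for the M-th derivative of fderiv gI near I
    have hgIK : ∀ z ∈ ball I (rbar / 8), ‖iteratedFDeriv ℝ M (fderiv ℝ gI) z‖ ≤ K := by
      intro z hz
      have hzb : z ∈ ball (0 : En n) rbar := hgeo hz
      rw [norm_iteratedFDeriv_fderiv]
      have hEq : gI = h + (-p) := by
        rw [hgIdef]; funext w; simp [sub_eq_add_neg]
      have hpco : ContDiffOn ℝ ((M + 1 : ℕ)) (-p) (ball (0 : En n) rbar) :=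
        ((hpcon (M + 1)).neg).contDiffOn
      have hwithin := iteratedFDerivWithin_add_apply (i := M + 1) (f := h) (g := -p)
        (hreg _ hzb) (hpco _ hzb) isOpen_ball.uniqueDiffOn hzb
      have e1 := iteratedFDerivWithin_of_isOpen (𝕜 := ℝ) (f := h + (-p)) (M + 1)
        isOpen_ball hzb
      have e2 := iteratedFDerivWithin_of_isOpen (𝕜 := ℝ) (f := h) (M + 1) isOpen_ball hzb
      have e3 := iteratedFDerivWithin_of_isOpen (𝕜 := ℝ) (f := -p) (M + 1) isOpen_ball hzb
      have e4 : iteratedFDeriv ℝ (M + 1) (-p) z = -(iteratedFDeriv ℝ (M + 1) p z) :=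
        iteratedFDeriv_neg_apply
      have hsplit2 : iteratedFDeriv ℝ (M + 1) gI z
          = iteratedFDeriv ℝ (M + 1) h z - iteratedFDeriv ℝ (M + 1) p z := by
        rw [hEq]
        calc iteratedFDeriv ℝ (M + 1) (h + -p) z
            = iteratedFDerivWithin ℝ (M + 1) (h + -p) (ball (0 : En n) rbar) z := e1.symm
          _ = iteratedFDerivWithin ℝ (M + 1) h (ball (0 : En n) rbar) z
              + iteratedFDerivWithin ℝ (M + 1) (-p) (ball (0 : En n) rbar) z := hwithin
          _ = iteratedFDeriv ℝ (M + 1) h z + iteratedFDeriv ℝ (M + 1) (-p) z := by rw [e2, e3]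
          _ = iteratedFDeriv ℝ (M + 1) h z - iteratedFDeriv ℝ (M + 1) p z := by
              rw [e4, ← sub_eq_add_neg]
      rw [hsplit2, hpzero z, sub_zero]
      apply hKb
      rw [mem_closedBall, dist_zero_right]
      have h2 : ‖z - I‖ < rbar / 8 := by have := mem_ball.mp hz; rwa [dist_eq_norm] at this
      have h3 : ‖z‖ ≤ ‖z - I‖ + ‖I‖ := by
        have h4 := norm_add_le (z - I) I
        rwa [sub_add_cancel] at h4
      linarith
    -- Taylor-type bound for fderiv gI
    have hfb := vanish_bound M (by omega) (En n →L[ℝ] ℝ) inferInstance inferInstance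
      (fderiv ℝ gI) I (rbar / 8) K
      (fun z hz => ((hgIcd (M + 1) le_rfl z (hgeo hz)).fderiv_right (m := (M : ℕ))
        (by norm_cast)))
      (fun j hj1 hjM => by
        refine norm_eq_zero.mp ?_
        rw [norm_iteratedFDeriv_fderiv, hvan (j + 1) (by omega) (by omega), norm_zero])
      hgIK
    -- membership
    have hxball : I + (x : En n) ∈ ball I (rbar / 8) := by
      rw [mem_ball, dist_eq_norm]
      have h2 : I + (x : En n) - I = (x : En n) := by abel
      rw [h2]
      calc ‖(x : En n)‖ ≤ ξ := hxle
        _ ≤ r := hξr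
        _ < rbar / 8 := by linarith
    have hxfull : I + (x : En n) ∈ ball (0 : En n) rbar := hgeo hxball
    have hdh1 : DifferentiableAt ℝ h (I + (x : En n)) :=
      (hball _ hxfull).differentiableAt (by simp)
    have hdh0 : DifferentiableAt ℝ h I :=
      (hball _ hIball).differentiableAt (by simp)
    have hdq : ∀ w : En n, DifferentiableAt ℝ q w := by
      intro w
      rw [hqdef]
      exact ((contDiff_evalP2 (N := 1) _).differentiable (by simp)).differentiableAt
    have hdp : ∀ w : En n, DifferentiableAt ℝ p w := fun w =>
      ((hpcon 1).differentiable (by simp)).differentiableAt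
    have hfp : ∀ w : En n, fderiv ℝ p w = fderiv ℝ q (w + -I) := by
      intro w
      rw [hpdef]
      exact fderiv_comp_add_const' q (-I) w
    have hq0 : fderiv ℝ q (0 : En n) = 0 := by
      rw [hqdef]; exact fderiv_evalP2_zero _
    have hΔ : fderiv ℝ h (I + (x : En n)) - fderiv ℝ h I - fderiv ℝ q (x : En n)
        = fderiv ℝ gI (I + (x : En n)) - fderiv ℝ gI I := by
      have e1 : fderiv ℝ gI (I + (x : En n))
          = fderiv ℝ h (I + (x : En n)) - fderiv ℝ p (I + (x : En n)) := by
        rw [hgIdef]; exact fderiv_sub hdh1 (hdp _)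
      have e2 : fderiv ℝ gI I = fderiv ℝ h I - fderiv ℝ p I := by
        rw [hgIdef]; exact fderiv_sub hdh0 (hdp _)
      have e3 : I + (x : En n) + -I = (x : En n) := by abel
      have e4 : I + -I = (0 : En n) := by abel
      rw [e1, e2, hfp, hfp, e3, e4, hq0]
      abel
    -- restriction identities
    have hgradA1 := fderiv_restrict h I Λ x hdh1
    have hgradA0 : fderiv ℝ (fun y : Λ => h (I + ↑y)) 0 = (fderiv ℝ h I).comp Λ.subtypeL := by
      have h00 : I + ((0 : Λ) : En n) = I := by
        rw [ZeroMemClass.coe_zero, add_zero]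
      have h2 := fderiv_restrict h I Λ 0 (by rw [h00]; exact hdh0)
      rw [h00] at h2
      exact h2
    have hgradB := fderiv_restrict0 q Λ x (hdq _)
    -- the error estimate
    have herrnorm : ‖(gradient (fun y : Λ => h (I + ↑y)) x - gradient (fun y : Λ => h (I + ↑y)) 0)
        - gradient (fun y : Λ => q ↑y) x‖ ≤ K * ξ ^ M := by
      have hstep1 : ‖(gradient (fun y : Λ => h (I + ↑y)) x - gradient (fun y : Λ => h (I + ↑y)) 0)
          - gradient (fun y : Λ => q ↑y) x‖
          = ‖fderiv ℝ (fun y : Λ => h (I + ↑y)) x - fderiv ℝ (fun y : Λ => h (I + ↑y)) 0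
            - fderiv ℝ (fun y : Λ => q ↑y) x‖ := by
        show ‖(InnerProductSpace.toDual ℝ Λ).symm _ - (InnerProductSpace.toDual ℝ Λ).symm _
          - (InnerProductSpace.toDual ℝ Λ).symm _‖ = _
        rw [← LinearIsometryEquiv.map_sub, ← LinearIsometryEquiv.map_sub, LinearIsometryEquiv.norm_map]
      rw [hstep1, hgradA1, hgradA0, hgradB, ← ContinuousLinearMap.sub_comp,
        ← ContinuousLinearMap.sub_comp]
      have hcompnorm : ‖(fderiv ℝ h (I + (x : En n)) - fderiv ℝ h I
          - fderiv ℝ q (x : En n)).comp Λ.subtypeL‖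
          ≤ ‖fderiv ℝ h (I + (x : En n)) - fderiv ℝ h I - fderiv ℝ q (x : En n)‖ := by
        refine ContinuousLinearMap.opNorm_le_bound _ (norm_nonneg _) fun v => ?_
        calc ‖(fderiv ℝ h (I + (x : En n)) - fderiv ℝ h I - fderiv ℝ q (x : En n))
              (Λ.subtypeL v)‖
            ≤ ‖fderiv ℝ h (I + (x : En n)) - fderiv ℝ h I - fderiv ℝ q (x : En n)‖
              * ‖Λ.subtypeL v‖ := ContinuousLinearMap.le_opNorm _ _
          _ = ‖fderiv ℝ h (I + (x : En n)) - fderiv ℝ h I - fderiv ℝ q (x : En n)‖ * ‖v‖ := rfl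
      refine le_trans hcompnorm ?_
      rw [hΔ]
      refine le_trans (hfb _ hxball) ?_
      have h9 : ‖I + (x : En n) - I‖ = ‖(x : En n)‖ := by
        have : I + (x : En n) - I = (x : En n) := by abel
        rw [this]
      rw [h9]
      exact mul_le_mul_of_nonneg_left (pow_le_pow_left₀ (norm_nonneg _) hxle M) hKpos.le
    -- combine
    have hlow := hηP x hxnorm
    have htri : ‖gradient (fun y : Λ => q ↑y) x‖
        - ‖gradient (fun y : Λ => h (I + ↑y)) x - gradient (fun y : Λ => h (I + ↑y)) 0‖
        ≤ ‖(gradient (fun y : Λ => h (I + ↑y)) x - gradient (fun y : Λ => h (I + ↑y)) 0)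
          - gradient (fun y : Λ => q ↑y) x‖ := by
      have h5 := abs_norm_sub_norm_le
        (gradient (fun y : Λ => h (I + ↑y)) x - gradient (fun y : Λ => h (I + ↑y)) 0)
        (gradient (fun y : Λ => q ↑y) x)
      have h6 := le_abs_self (‖gradient (fun y : Λ => q ↑y) x‖
        - ‖gradient (fun y : Λ => h (I + ↑y)) x - gradient (fun y : Λ => h (I + ↑y)) 0‖)
      rw [abs_sub_comm] at h6
      linarith
    have hKξ : K * ξ ≤ C' / 2 := by
      have h10 : ξ ≤ C' / (2 * K) := le_trans hξr hrK
      have h11 : K * ξ ≤ K * (C' / (2 * K)) := by nlinarith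
      calc K * ξ ≤ K * (C' / (2 * K)) := h11
        _ = C' / 2 := by field_simp
    have hpow : K * ξ ^ M ≤ C' / 2 * ξ ^ (M - 1) := by
      have h11 : ξ ^ M = ξ * ξ ^ (M - 1) := by
        conv_lhs => rw [show M = 1 + (M - 1) by omega]
        rw [pow_add, pow_one]
      rw [h11]
      calc K * (ξ * ξ ^ (M - 1)) = (K * ξ) * ξ ^ (M - 1) := by ring
        _ ≤ (C' / 2) * ξ ^ (M - 1) :=
          mul_le_mul_of_nonneg_right hKξ (pow_nonneg hξpos.le _)
    have hfinal : C' / 2 * ξ ^ (M - 1)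
        < ‖gradient (fun y : Λ => h (I + ↑y)) x - gradient (fun y : Λ => h (I + ↑y)) 0‖ := by
      linarith
    have hcast : ξ ^ (((M : ℕ) : ℝ) - 1) = ξ ^ ((M - 1 : ℕ)) := by
      rw [show ((M : ℕ) : ℝ) - 1 = ((M - 1 : ℕ) : ℝ) by
        rw [Nat.cast_sub (by omega : 1 ≤ M)]; norm_num]
      exact Real.rpow_natCast ξ (M - 1)
    rw [hcast]
    exact hfinal


end
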